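/- Let Q : 𝔻 → [0,∞] be measurable on the unit disk 𝔻 ⊂ ℂ and Φ : [0,∞] → [0,∞] a non-decreasing convex function. Let q(r) = (1/2π)∫₀^{2π} Q(r e^{iθ}) dθ be the circular average of Q and N = ∫_𝔻 Φ(Q(z)) dxdy. Then ∫₀¹ dr/(r q(r)) ≥ (1/2) ∫_N^∞ dτ/(τ Φ⁻¹(τ)), where Φ⁻¹(τ) = inf { t : Φ(t) ≥ τ }. -/

import Mathlib

/-!
Substituting `u = r²` turns the right-hand side into `½ ∫₀¹ du / (u q(√u))`, and substituting
`τ = N / u` turns `∫_N^∞ dτ / (τ Φ⁻¹(τ))` into `∫₀¹ du / (u Φ⁻¹(N / u))`. By Jensen's inequality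
on the circle of radius `√u`, `Φ(c) ≤ G(u)` whenever `c < q(√u)`, where `G(u)` is the circular
mean of `Φ ∘ Q`, and `∫₀¹ G ≤ N` in polar coordinates. So for every level `c`, with
`D = sup_{c' < c} Φ(c')`, the set `{q(√u) ≥ c}` has measure at most `N / D`, while
`{Φ⁻¹(N / u) < c}` lies in `[N / D, 1)`. As the weight `1/u` is decreasing, `du/u` gives
`{q(√u) < c}` at least the mass of `[N / D, 1)`, and the layer-cake formula integrates these
comparisons over the levels.
-/

open ENNReal MeasureTheory Set Real

/-- The generalized inverse of a non-decreasing `Φ : [0,∞] → [0,∞]`: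
`Φ⁻¹(τ) = inf { t : Φ(t) ≥ τ }`, with `inf ∅ = ∞`. -/
noncomputable def incInv (Φ : ℝ≥0∞ → ℝ≥0∞) (τ : ℝ≥0∞) : ℝ≥0∞ :=
  sInf {t : ℝ≥0∞ | τ ≤ Φ t}

theorem ConvexOn.add_rightDeriv_mul_sub_le {S : Set ℝ} {f : ℝ → ℝ} (hf : ConvexOn ℝ S f)
    {x y : ℝ} (hx : x ∈ interior S) (hy : y ∈ S) :
    f x + derivWithin f (Ioi x) x * (y - x) ≤ f y := by
  rcases lt_trichotomy y x with hyx | rfl | hxy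
  · have h := (hf.slope_le_leftDeriv_of_mem_interior hy hx hyx).trans
      (hf.leftDeriv_le_rightDeriv_of_mem_interior hx)
    rw [slope_def_field, div_le_iff₀ (sub_pos.2 hyx)] at h
    linarith
  · simp
  · have h := hf.rightDeriv_le_slope_of_mem_interior hx hy hxy
    rw [slope_def_field, le_div_iff₀ (sub_pos.2 hxy)] at h
    linarith

theorem add_mul_le_add_mul_of_forall_ofReal {Φ : ℝ≥0∞ → ℝ≥0∞} (hΦ : Monotone Φ) {s t : ℝ≥0∞}
    (h : ∀ x : ℝ, 0 ≤ x → Φ t + s * ENNReal.ofReal x ≤ Φ (ENNReal.ofReal x) + s * t)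
    (y : ℝ≥0∞) : Φ t + s * y ≤ Φ y + s * t := by
  rcases eq_or_ne y ∞ with rfl | hy
  · calc Φ t + s * ∞ = ⨆ n : ℕ, Φ t + s * ENNReal.ofReal n := by
          simp_rw [ENNReal.ofReal_natCast]
          rw [← ENNReal.add_iSup, ← ENNReal.mul_iSup, ENNReal.iSup_natCast]
      _ ≤ Φ ∞ + s * t := iSup_le fun n => (h n n.cast_nonneg).trans (by gcongr; exact hΦ le_top)
  · simpa [ENNReal.ofReal_toReal hy] using h y.toReal ENNReal.toReal_nonneg

section Jensen

variable {Φ : ℝ≥0∞ → ℝ≥0∞}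
  (hconv : ∀ a b t₁ t₂ : ℝ≥0∞, a + b = 1 → Φ (a * t₁ + b * t₂) ≤ a * Φ t₁ + b * Φ t₂)
include hconv

theorem convexOn_toReal_comp_ofReal :
    ConvexOn ℝ {x : ℝ | 0 ≤ x ∧ Φ (ENNReal.ofReal x) ≠ ∞}
      fun x => (Φ (ENNReal.ofReal x)).toReal := by
  have key : ∀ ⦃x y a b : ℝ⦄, 0 ≤ x → 0 ≤ y → 0 ≤ a → 0 ≤ b → a + b = 1 →
      Φ (ENNReal.ofReal (a * x + b * y)) ≤
        ENNReal.ofReal a * Φ (ENNReal.ofReal x) + ENNReal.ofReal b * Φ (ENNReal.ofReal y) := by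
    intro x y a b hx hy ha hb hab
    rw [ENNReal.ofReal_add (by positivity) (by positivity), ENNReal.ofReal_mul ha,
      ENNReal.ofReal_mul hb]
    exact hconv _ _ _ _ (by rw [← ENNReal.ofReal_add ha hb, hab, ENNReal.ofReal_one])
  refine ⟨?_, ?_⟩ <;> rintro x ⟨hx, hΦx⟩ y ⟨hy, hΦy⟩ a b ha hb hab <;>
    have hfin : ENNReal.ofReal a * Φ (ENNReal.ofReal x) + ENNReal.ofReal b * Φ (ENNReal.ofReal y)
      ≠ ∞ := by finiteness
  · exact ⟨by positivity, ne_top_of_le_ne_top hfin (key hx hy ha hb hab)⟩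
  · have h := ENNReal.toReal_mono hfin (key hx hy ha hb hab)
    rw [ENNReal.toReal_add (by finiteness) (by finiteness), ENNReal.toReal_mul,
      ENNReal.toReal_mul, ENNReal.toReal_ofReal ha, ENNReal.toReal_ofReal hb] at h
    exact h

theorem exists_supporting_line (hΦ : Monotone Φ) {t y₀ : ℝ≥0∞} (hty₀ : t < y₀)
    (hy₀ : Φ y₀ ≠ ∞) : ∃ s ≠ ∞, ∀ y, Φ t + s * y ≤ Φ y + s * t := by
  rcases eq_or_ne t 0 with rfl | ht0
  · exact ⟨0, ENNReal.zero_ne_top, fun y => by simpa using hΦ zero_le⟩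
  obtain ⟨b, -, htb, hby₀⟩ := ENNReal.lt_iff_exists_real_btwn.1 hty₀
  obtain ⟨tr, rfl⟩ : ∃ tr : ℝ, ENNReal.ofReal tr = t := ⟨_, ENNReal.ofReal_toReal htb.ne_top⟩
  have htr : 0 < tr := by simpa using ht0
  set S := {x : ℝ | 0 ≤ x ∧ Φ (ENNReal.ofReal x) ≠ ∞}
  set F := fun x : ℝ => (Φ (ENNReal.ofReal x)).toReal
  have hFb : Φ (ENNReal.ofReal b) ≠ ∞ := ne_top_of_le_ne_top hy₀ (hΦ hby₀.le)
  have hIoo : Ioo 0 b ⊆ S := fun x hx =>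
    ⟨hx.1.le, ne_top_of_le_ne_top hFb (hΦ (ENNReal.ofReal_le_ofReal hx.2.le))⟩
  have htS : tr ∈ interior S := interior_mono hIoo <| by
    rw [interior_Ioo]
    exact ⟨htr, (ENNReal.ofReal_lt_ofReal_iff'.1 htb).1⟩
  set σ := derivWithin F (Ioi tr) tr
  have hsub : ∀ x ∈ S, F tr + σ * (x - tr) ≤ F x := fun x hx =>
    (convexOn_toReal_comp_ofReal hconv).add_rightDeriv_mul_sub_le htS hx
  have hσ : 0 ≤ σ := by
    have h0 := hsub 0 ⟨le_rfl, ne_top_of_le_ne_top hFb (hΦ (by simp))⟩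
    have hmono : F 0 ≤ F tr := ENNReal.toReal_mono (interior_subset htS).2 (hΦ (by simp))
    nlinarith
  refine ⟨ENNReal.ofReal σ, ENNReal.ofReal_ne_top, add_mul_le_add_mul_of_forall_ofReal hΦ ?_⟩
  intro x hx
  by_cases hΦx : Φ (ENNReal.ofReal x) = ∞
  · simp [hΦx]
  have h := ENNReal.ofReal_le_ofReal
    (show F tr + σ * x ≤ F x + σ * tr by linarith [hsub x ⟨hx, hΦx⟩])
  rwa [ENNReal.ofReal_add (by positivity) (by positivity),
    ENNReal.ofReal_add (by positivity) (by positivity), ENNReal.ofReal_mul hσ,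
    ENNReal.ofReal_mul hσ, ENNReal.ofReal_toReal (interior_subset htS).2,
    ENNReal.ofReal_toReal hΦx] at h

theorem le_lintegral_comp_of_lt_lintegral (hΦ : Monotone Φ) {α : Type*} [MeasurableSpace α]
    {μ : Measure α} [IsProbabilityMeasure μ] {f : α → ℝ≥0∞} (hf : Measurable f) {t : ℝ≥0∞}
    (ht : t < ∫⁻ a, f a ∂μ) : Φ t ≤ ∫⁻ a, Φ (f a) ∂μ := by
  by_cases hfin : ∃ y₀, t < y₀ ∧ Φ y₀ ≠ ∞
  · obtain ⟨y₀, hty₀, hy₀⟩ := hfin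
    obtain ⟨s, hs, hline⟩ := exists_supporting_line hconv hΦ hty₀ hy₀
    have hint : Φ t + s * ∫⁻ a, f a ∂μ ≤ (∫⁻ a, Φ (f a) ∂μ) + s * t := by
      calc Φ t + s * ∫⁻ a, f a ∂μ = ∫⁻ a, Φ t + s * f a ∂μ := by
            rw [lintegral_add_left measurable_const, lintegral_const_mul _ hf, lintegral_const,
              measure_univ, mul_one]
        _ ≤ ∫⁻ a, Φ (f a) + s * t ∂μ := lintegral_mono fun a => hline (f a)
        _ = (∫⁻ a, Φ (f a) ∂μ) + s * t := by
            rw [lintegral_add_right _ measurable_const, lintegral_const, measure_univ, mul_one]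
    refine (ENNReal.add_le_add_iff_right (ENNReal.mul_ne_top hs ht.ne_top)).1 ?_
    exact le_trans (by gcongr) hint
  · push Not at hfin
    have hpos : μ {a | t < f a} ≠ 0 := by
      intro h0
      have hae : ∀ᵐ a ∂μ, f a ≤ t := by
        filter_upwards [measure_eq_zero_iff_ae_notMem.1 h0] with a ha using not_lt.1 ha
      exact not_le.2 ht ((lintegral_mono_ae hae).trans (by simp))
    calc Φ t ≤ ∞ * μ {a | t < f a} := by rw [ENNReal.top_mul hpos]; exact le_top
      _ = ∫⁻ a in {a | t < f a}, ∞ ∂μ := (setLIntegral_const _ _).symm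
      _ ≤ ∫⁻ a in {a | t < f a}, Φ (f a) ∂μ :=
          setLIntegral_mono' (measurableSet_lt measurable_const hf) fun a ha => (hfin _ ha).ge
      _ ≤ ∫⁻ a, Φ (f a) ∂μ := setLIntegral_le_lintegral _ _

end Jensen

theorem ENNReal.mul_mul_inv_mul_cancel_left {a : ℝ≥0∞} (ha0 : a ≠ 0) (hat : a ≠ ∞)
    (b x : ℝ≥0∞) : a * b * (a * x)⁻¹ = b * x⁻¹ := by
  rw [ENNReal.mul_inv (Or.inl ha0) (Or.inl hat), mul_mul_mul_comm,
    ENNReal.mul_inv_cancel ha0 hat, one_mul]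

theorem lintegral_Ioo_zero_one_eq_lintegral_sq (f : ℝ → ℝ≥0∞) :
    ∫⁻ u in Ioo 0 1, f u = ∫⁻ r in Ioo 0 1, ENNReal.ofReal (2 * r) * f (r ^ 2) := by
  have himage : (fun r : ℝ => r ^ 2) '' Ioo 0 1 = Ioo 0 1 := by
    ext u
    refine ⟨?_, fun hu => ⟨√u, ⟨Real.sqrt_pos.2 hu.1,
      (Real.sqrt_lt' one_pos).2 (by simpa using hu.2)⟩, Real.sq_sqrt hu.1.le⟩⟩
    rintro ⟨r, hr, rfl⟩
    exact ⟨pow_pos hr.1 2, pow_lt_one₀ hr.1.le hr.2 two_ne_zero⟩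
  rw [← himage, lintegral_image_eq_lintegral_abs_deriv_mul measurableSet_Ioo
    (fun r _ => by simpa using (hasDerivAt_pow 2 r).hasDerivWithinAt)
    ((pow_left_strictMonoOn₀ two_ne_zero).injOn.mono fun r hr => hr.1.le), himage]
  refine setLIntegral_congr_fun measurableSet_Ioo fun r hr => ?_
  rw [abs_of_pos (by linarith [hr.1])]

theorem lintegral_Ioi_eq_lintegral_Ioo_div {A : ℝ} (hA : 0 < A) (f : ℝ → ℝ≥0∞) :
    ∫⁻ τ in Ioi A, f τ = ∫⁻ u in Ioo 0 1, ENNReal.ofReal (A / u ^ 2) * f (A / u) := by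
  have himage : (fun u : ℝ => A / u) '' Ioo 0 1 = Ioi A := by
    ext τ
    refine ⟨?_, fun hτ => ⟨A / τ, ⟨div_pos hA (hA.trans hτ), ?_⟩, ?_⟩⟩
    · rintro ⟨u, hu, rfl⟩
      exact (lt_div_iff₀ hu.1).2 (by nlinarith [hu.2])
    · exact (div_lt_one (hA.trans hτ)).2 hτ
    · field_simp
  have hderiv : ∀ u ∈ Ioo (0 : ℝ) 1,
      HasDerivWithinAt (fun u => A / u) (-(A / u ^ 2)) (Ioo 0 1) u := fun u hu => by
    simpa [div_eq_mul_inv] using ((hasDerivAt_inv hu.1.ne').const_mul A).hasDerivWithinAt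
  have hinj : InjOn (fun u : ℝ => A / u) (Ioo 0 1) := fun u _ v _ h => by
    simp only [div_eq_mul_inv] at h
    exact inv_injective (mul_left_cancel₀ hA.ne' h)
  rw [← himage, lintegral_image_eq_lintegral_abs_deriv_mul measurableSet_Ioo hderiv hinj]
  refine setLIntegral_congr_fun measurableSet_Ioo fun u hu => ?_
  rw [abs_neg, abs_of_pos (div_pos hA (pow_pos hu.1 2))]

theorem lintegral_inv_mul_eq_lintegral_Ioo_comp_div {N : ℝ≥0∞} (hN0 : N ≠ 0) (hN : N ≠ ∞)
    (ψ : ℝ≥0∞ → ℝ≥0∞) :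
    ∫⁻ τ in {τ : ℝ | N < ENNReal.ofReal τ}, (ENNReal.ofReal τ * ψ (ENNReal.ofReal τ))⁻¹ =
      ∫⁻ u in Ioo 0 1, (ENNReal.ofReal u * ψ (N / ENNReal.ofReal u))⁻¹ := by
  have hA : 0 < N.toReal := ENNReal.toReal_pos hN0 hN
  have hset : {τ : ℝ | N < ENNReal.ofReal τ} = Ioi N.toReal := by
    ext τ
    exact ENNReal.lt_ofReal_iff_toReal_lt hN
  rw [hset, lintegral_Ioi_eq_lintegral_Ioo_div hA]
  refine setLIntegral_congr_fun measurableSet_Ioo fun u hu => ?_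
  have hτ : 0 < N.toReal / u := div_pos hA hu.1
  rw [show N.toReal / u ^ 2 = N.toReal / u * u⁻¹ by field_simp, ENNReal.ofReal_mul hτ.le,
    ENNReal.mul_mul_inv_mul_cancel_left (by simpa using hτ) ENNReal.ofReal_ne_top,
    ENNReal.ofReal_inv_of_pos hu.1,
    ← ENNReal.mul_inv (Or.inl (by simpa using hu.1)) (Or.inl ENNReal.ofReal_ne_top),
    ENNReal.ofReal_div_of_pos hu.1, ENNReal.ofReal_toReal hN]

theorem lintegral_Ioo_inv_mul_comp_sqrt (g : ℝ → ℝ≥0∞) :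
    ∫⁻ u in Ioo 0 1, (ENNReal.ofReal u * g √u)⁻¹ =
      2 * ∫⁻ r in Ioo 0 1, (ENNReal.ofReal r * g r)⁻¹ := by
  rw [lintegral_Ioo_zero_one_eq_lintegral_sq, ← lintegral_const_mul' _ _ ENNReal.ofNat_ne_top]
  refine setLIntegral_congr_fun measurableSet_Ioo fun r hr => ?_
  rw [Real.sqrt_sq hr.1.le, ENNReal.ofReal_pow hr.1.le, ENNReal.ofReal_mul zero_le_two,
    ENNReal.ofReal_ofNat, mul_comm (2 : ℝ≥0∞), sq, mul_assoc (ENNReal.ofReal r) (ENNReal.ofReal r),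
    ENNReal.mul_mul_inv_mul_cancel_left (by simpa using hr.1) ENNReal.ofReal_ne_top]

theorem Function.Periodic.setLIntegral_Ioc_add_eq {f : ℝ → ℝ≥0∞} {T : ℝ} (hT : 0 < T)
    (hf : Function.Periodic f T) (t s : ℝ) :
    ∫⁻ x in Ioc t (t + T), f x = ∫⁻ x in Ioc s (s + T), f x := by
  have := Fact.mk hT
  have h := fun a => AddCircle.lintegral_preimage (T := T) a hf.lift
  simp only [Function.Periodic.lift_coe] at h
  rw [h, h]

theorem lintegral_Ioo_neg_pi_pi_circle (f : ℂ → ℝ≥0∞) (r : ℝ) :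
    ∫⁻ θ in Ioo (-π) π, f (r * Complex.exp (θ * Complex.I)) =
      ∫⁻ θ in Ioo 0 (2 * π), f (r * Complex.exp (θ * Complex.I)) := by
  have hper : Function.Periodic (fun θ : ℝ => f (r * Complex.exp (θ * Complex.I))) (2 * π) := by
    intro θ
    simp [add_mul, Complex.exp_add]
  have hshift := hper.setLIntegral_Ioc_add_eq Real.two_pi_pos (-π) 0
  rw [show -π + 2 * π = π by ring, zero_add] at hshift
  rw [Measure.restrict_congr_set Ioo_ae_eq_Ioc, hshift, Measure.restrict_congr_set Ioo_ae_eq_Ioc]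

theorem measurable_lintegral_circle {f : ℂ → ℝ≥0∞} (hf : Measurable f) (s : Set ℝ) :
    Measurable fun r : ℝ => ∫⁻ θ in s, f (r * Complex.exp (θ * Complex.I)) :=
  Measurable.lintegral_prod_right (hf.comp (by fun_prop))

theorem lintegral_ball_eq_lintegral_circle {f : ℂ → ℝ≥0∞} (hf : Measurable f) (R : ℝ) :
    ∫⁻ z in Metric.ball 0 R, f z =
      ∫⁻ r in Ioo 0 R, ENNReal.ofReal r *
        ∫⁻ θ in Ioo 0 (2 * π), f (r * Complex.exp (θ * Complex.I)) := by
  set F := (Metric.ball (0 : ℂ) R).indicator f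
  have hpolar : ∀ p : ℝ × ℝ,
      Complex.polarCoord.symm p = p.1 * Complex.exp (p.2 * Complex.I) := by
    intro p
    simp [Complex.exp_mul_I, ← Complex.ofReal_cos, ← Complex.ofReal_sin]
  have hcircle : ∀ r ∈ Ioi (0 : ℝ),
      ∫⁻ θ in Ioo (-π) π, F (r * Complex.exp (θ * Complex.I)) =
        (Iio R).indicator
          (fun r => ∫⁻ θ in Ioo 0 (2 * π), f (r * Complex.exp (θ * Complex.I))) r := by
    intro r hr
    have hnorm : ∀ θ : ℝ, r * Complex.exp (θ * Complex.I) ∈ Metric.ball 0 R ↔ r ∈ Iio R := by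
      simp [Complex.norm_exp_ofReal_mul_I, abs_of_pos (mem_Ioi.1 hr)]
    rw [lintegral_Ioo_neg_pi_pi_circle]
    by_cases hrR : r ∈ Iio R
    · rw [indicator_of_mem hrR]
      exact setLIntegral_congr_fun measurableSet_Ioo fun θ _ =>
        indicator_of_mem ((hnorm θ).2 hrR) f
    · rw [indicator_of_notMem hrR]
      exact setLIntegral_eq_zero measurableSet_Ioo fun θ _ =>
        indicator_of_notMem (mt (hnorm θ).1 hrR) f
  calc ∫⁻ z in Metric.ball 0 R, f z = ∫⁻ z, F z := (lintegral_indicator measurableSet_ball f).symm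
    _ = ∫⁻ p in Ioi 0 ×ˢ Ioo (-π) π, ENNReal.ofReal p.1 • F (Complex.polarCoord.symm p) :=
        (Complex.lintegral_comp_polarCoord_symm F).symm
    _ = ∫⁻ r in Ioi 0, ∫⁻ θ in Ioo (-π) π,
          ENNReal.ofReal r * F (r * Complex.exp (θ * Complex.I)) := by
        simp only [hpolar, smul_eq_mul]
        rw [Measure.volume_eq_prod, ← Measure.prod_restrict, lintegral_prod]
        exact (Measurable.mul (by fun_prop)
          ((hf.indicator measurableSet_ball).comp (by fun_prop))).aemeasurable
    _ = ∫⁻ r in Ioi 0, (Iio R).indicator (fun r => ENNReal.ofReal r *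
          ∫⁻ θ in Ioo 0 (2 * π), f (r * Complex.exp (θ * Complex.I))) r := by
        refine setLIntegral_congr_fun measurableSet_Ioi fun r hr => ?_
        rw [lintegral_const_mul' _ _ ENNReal.ofReal_ne_top, hcircle r hr, indicator_mul_right]
    _ = _ := by
        rw [lintegral_indicator measurableSet_Iio, Measure.restrict_restrict measurableSet_Iio,
          Iio_inter_Ioi]

theorem lintegral_Ioo_laverage_circle_sqrt_le {f : ℂ → ℝ≥0∞} (hf : Measurable f) :
    ∫⁻ u in Ioo 0 1, ⨍⁻ θ in Ioo 0 (2 * π), f (√u * Complex.exp (θ * Complex.I)) ∂volume ≤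
      ∫⁻ z in Metric.ball 0 1, f z := by
  rw [lintegral_Ioo_zero_one_eq_lintegral_sq, lintegral_ball_eq_lintegral_circle hf]
  refine setLIntegral_mono' measurableSet_Ioo fun r hr => ?_
  simp only [Real.sqrt_sq hr.1.le, setLAverage_eq, Real.volume_Ioo, sub_zero,
    ENNReal.div_eq_inv_mul, ← mul_assoc]
  rw [← ENNReal.ofReal_inv_of_pos Real.two_pi_pos, ← ENNReal.ofReal_mul (by linarith [hr.1])]
  gcongr
  calc 2 * r * (2 * π)⁻¹ = r / π := by field_simp
    _ ≤ r := div_le_self hr.1.le (by linarith [Real.pi_gt_three])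

theorem volume_Ioi_inter_ofReal_lt (c : ℝ≥0∞) :
    volume (Ioi (0 : ℝ) ∩ {t | ENNReal.ofReal t < c}) = c := by
  rcases eq_or_ne c ∞ with rfl | hc
  · simp
  have hset : Ioi (0 : ℝ) ∩ {t | ENNReal.ofReal t < c} = Ioo 0 c.toReal := by
    ext t
    simp only [mem_inter_iff, mem_Ioi, mem_ofPred_eq, mem_Ioo, and_congr_right_iff]
    exact fun ht => ENNReal.ofReal_lt_iff_lt_toReal ht.le hc
  rw [hset, Real.volume_Ioo, sub_zero, ENNReal.ofReal_toReal hc]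

theorem lintegral_mul_eq_lintegral_setLIntegral_lt {α : Type*} [MeasurableSpace α]
    {μ : Measure α} [SFinite μ] {f w : α → ℝ≥0∞} (hf : Measurable f) (hw : Measurable w) :
    ∫⁻ a, w a * f a ∂μ = ∫⁻ t in Ioi 0, ∫⁻ a in {a | ENNReal.ofReal t < f a}, w a ∂μ := by
  set A := {p : α × ℝ | ENNReal.ofReal p.2 < f p.1}
  have hA : MeasurableSet A := measurableSet_lt (by fun_prop) (hf.comp measurable_fst)
  calc ∫⁻ a, w a * f a ∂μ
      = ∫⁻ a, (∫⁻ t in Ioi (0 : ℝ), A.indicator (fun p => w p.1) (a, t)) ∂μ := by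
        refine lintegral_congr fun a => ?_
        change _ = ∫⁻ t in Ioi 0, {t : ℝ | ENNReal.ofReal t < f a}.indicator (fun _ => w a) t
        rw [lintegral_indicator (measurableSet_lt (by fun_prop) measurable_const),
          setLIntegral_const, Measure.restrict_apply' measurableSet_Ioi, inter_comm,
          volume_Ioi_inter_ofReal_lt]
    _ = ∫⁻ t in Ioi (0 : ℝ), ∫⁻ a, A.indicator (fun p => w p.1) (a, t) ∂μ :=
        lintegral_lintegral_swap (f := fun a t => A.indicator (fun p => w p.1) (a, t))
          ((hw.comp measurable_fst).indicator hA).aemeasurable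
    _ = ∫⁻ t in Ioi 0, ∫⁻ a in {a | ENNReal.ofReal t < f a}, w a ∂μ := by
        refine lintegral_congr fun t => ?_
        change ∫⁻ a, {a | ENNReal.ofReal t < f a}.indicator w a ∂μ = _
        exact lintegral_indicator (measurableSet_lt measurable_const hf) w

theorem setLIntegral_Ico_le_of_antitone {f : ℝ → ℝ≥0∞} (hf : Antitone f) {E : Set ℝ}
    (hE : MeasurableSet E) {a b : ℝ} (hEb : E ⊆ Iio b) (hvol : ENNReal.ofReal (b - a) ≤ volume E) :
    ∫⁻ x in Ico a b, f x ≤ ∫⁻ x in E, f x := by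
  have hdiff : volume (Ico a b \ E) ≤ volume (E \ Ico a b) := by
    have hT := measure_sdiff_add_inter (μ := volume) (Ico a b) hE
    have hE' := measure_sdiff_add_inter (μ := volume) E (measurableSet_Ico (a := a) (b := b))
    rw [inter_comm] at hE'
    refine (ENNReal.add_le_add_iff_right ?_).1 ((hT.trans_le ?_).trans hE'.ge)
    · exact ne_top_of_le_ne_top (by simp) (measure_mono (μ := volume) inter_subset_left)
    · rwa [Real.volume_Ico]
  calc ∫⁻ x in Ico a b, f x
      = (∫⁻ x in E ∩ Ico a b, f x) + ∫⁻ x in Ico a b \ E, f x := by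
        rw [inter_comm, lintegral_inter_add_sdiff _ _ hE]
    _ ≤ (∫⁻ x in E ∩ Ico a b, f x) + ∫⁻ x in E \ Ico a b, f x := by
        refine add_le_add le_rfl ?_
        calc ∫⁻ x in Ico a b \ E, f x ≤ ∫⁻ _ in Ico a b \ E, f a :=
              setLIntegral_mono' (measurableSet_Ico.diff hE) fun x hx => hf hx.1.1
          _ ≤ ∫⁻ _ in E \ Ico a b, f a := by
              rw [setLIntegral_const, setLIntegral_const]
              gcongr
          _ ≤ ∫⁻ x in E \ Ico a b, f x := by
              refine setLIntegral_mono' (hE.diff measurableSet_Ico) fun x hx => hf ?_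
              by_contra hax
              exact hx.2 ⟨not_le.1 hax |>.le, hEb hx.1⟩
    _ = ∫⁻ x in E, f x := lintegral_inter_add_sdiff _ _ measurableSet_Ico

theorem incInv_mono (Φ : ℝ≥0∞ → ℝ≥0∞) : Monotone (incInv Φ) :=
  fun _ _ hab => sInf_le_sInf fun _ ht => hab.trans ht

theorem le_iSup_lt_of_incInv_lt {Φ : ℝ≥0∞ → ℝ≥0∞} {τ c : ℝ≥0∞} (h : incInv Φ τ < c) :
    τ ≤ ⨆ c' < c, Φ c' := by
  obtain ⟨c', hτ, hc'⟩ := sInf_lt_iff.1 h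
  exact hτ.trans (le_iSup₂_of_le c' hc' le_rfl)

theorem iSup_lt_mul_measure_le {α : Type*} [MeasurableSpace α] {μ : Measure α} {s : Set α}
    (hs : MeasurableSet s) {Φ : ℝ≥0∞ → ℝ≥0∞} {g G : α → ℝ≥0∞} (hg : Measurable g) {N : ℝ≥0∞}
    (hGN : ∫⁻ a in s, G a ∂μ ≤ N) (hΦG : ∀ a ∈ s, ∀ c < g a, Φ c ≤ G a) (c : ℝ≥0∞) :
    (⨆ c' < c, Φ c') * μ (s ∩ {a | c ≤ g a}) ≤ N := by
  simp_rw [ENNReal.iSup_mul]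
  refine iSup₂_le fun c' hc' => ?_
  calc Φ c' * μ (s ∩ {a | c ≤ g a}) = ∫⁻ _ in s ∩ {a | c ≤ g a}, Φ c' ∂μ :=
        (setLIntegral_const _ _).symm
    _ ≤ ∫⁻ a in s ∩ {a | c ≤ g a}, G a ∂μ :=
        setLIntegral_mono' (hs.inter (measurableSet_le measurable_const hg))
          fun a ha => hΦG a ha.1 c' (hc'.trans_le ha.2)
    _ ≤ ∫⁻ a in s, G a ∂μ := lintegral_mono_set inter_subset_left
    _ ≤ N := hGN

section Rearrangement

variable {Φ : ℝ≥0∞ → ℝ≥0∞} {g : ℝ → ℝ≥0∞} {N : ℝ≥0∞}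

theorem setLIntegral_inv_incInv_lt_le (hg : Measurable g) (hN0 : N ≠ 0) (hN : N ≠ ∞)
    {c : ℝ≥0∞} (hdist : (⨆ c' < c, Φ c') * volume (Ioo 0 1 ∩ {u | c ≤ g u}) ≤ N) :
    ∫⁻ u in Ioo 0 1 ∩ {u | incInv Φ (N / ENNReal.ofReal u) < c}, (ENNReal.ofReal u)⁻¹ ≤
      ∫⁻ u in Ioo 0 1 ∩ {u | g u < c}, (ENNReal.ofReal u)⁻¹ := by
  set D := ⨆ c' < c, Φ c'
  set w := (min (N / D) 1).toReal
  have hw : ENNReal.ofReal w = min (N / D) 1 :=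
    ENNReal.ofReal_toReal (ne_top_of_le_ne_top ENNReal.one_ne_top (min_le_right _ _))
  have hsub : Ioo 0 1 ∩ {u | incInv Φ (N / ENNReal.ofReal u) < c} ⊆ Ico w 1 := by
    rintro u ⟨hu, hlt⟩
    have hND := le_iSup_lt_of_incInv_lt hlt
    rw [ENNReal.div_le_iff (by simpa using hu.1) ENNReal.ofReal_ne_top] at hND
    refine ⟨(ENNReal.ofReal_le_ofReal_iff hu.1.le).1 ?_, hu.2⟩
    exact hw ▸ (min_le_left _ _).trans (ENNReal.div_le_of_le_mul (mul_comm D _ ▸ hND))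
  have hbad : volume (Ioo 0 1 ∩ {u | c ≤ g u}) ≤ ENNReal.ofReal w := by
    rw [hw]
    refine le_min ?_ ((measure_mono inter_subset_left).trans (by simp))
    exact (ENNReal.le_div_iff_mul_le (Or.inr hN0) (Or.inr hN)).2 (mul_comm D _ ▸ hdist)
  have hgood : ENNReal.ofReal (1 - w) ≤ volume (Ioo 0 1 ∩ {u | g u < c}) := by
    have hsplit := measure_inter_add_sdiff (μ := volume) (Ioo (0 : ℝ) 1)
      (measurableSet_lt hg measurable_const : MeasurableSet {u | g u < c})
    have hdiff : Ioo 0 1 \ {u | g u < c} = Ioo 0 1 ∩ {u | c ≤ g u} := by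
      ext u
      simp
    rw [hdiff, Real.volume_Ioo, sub_zero, ENNReal.ofReal_one] at hsplit
    rw [ENNReal.ofReal_sub _ ENNReal.toReal_nonneg, ENNReal.ofReal_one, tsub_le_iff_right]
    exact hsplit.symm.le.trans (by gcongr)
  calc _ ≤ ∫⁻ u in Ico w 1, (ENNReal.ofReal u)⁻¹ := lintegral_mono_set hsub
    _ ≤ _ := setLIntegral_Ico_le_of_antitone
        (fun x y hxy => ENNReal.inv_le_inv.2 (ENNReal.ofReal_le_ofReal hxy))
        (measurableSet_Ioo.inter (measurableSet_lt hg measurable_const)) (fun u hu => hu.1.2) hgood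

theorem lintegral_inv_mul_incInv_le (hg : Measurable g) (hN0 : N ≠ 0) (hN : N ≠ ∞)
    (hdist : ∀ c, (⨆ c' < c, Φ c') * volume (Ioo 0 1 ∩ {u | c ≤ g u}) ≤ N) :
    ∫⁻ u in Ioo 0 1, (ENNReal.ofReal u * incInv Φ (N / ENNReal.ofReal u))⁻¹ ≤
      ∫⁻ u in Ioo 0 1, (ENNReal.ofReal u * g u)⁻¹ := by
  have hlayer : ∀ ψ : ℝ → ℝ≥0∞, Measurable ψ → ∫⁻ u in Ioo 0 1, (ENNReal.ofReal u * ψ u)⁻¹ =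
      ∫⁻ t in Ioi 0, ∫⁻ u in Ioo 0 1 ∩ {u | ψ u < (ENNReal.ofReal t)⁻¹}, (ENNReal.ofReal u)⁻¹ := by
    intro ψ hψ
    rw [setLIntegral_congr_fun measurableSet_Ioo fun u hu =>
      ENNReal.mul_inv (Or.inl (by simpa using hu.1)) (Or.inl ENNReal.ofReal_ne_top),
      lintegral_mul_eq_lintegral_setLIntegral_lt (f := fun u => (ψ u)⁻¹) (by fun_prop)
        (by fun_prop)]
    refine lintegral_congr fun t => ?_
    simp_rw [ENNReal.lt_inv_iff_lt_inv]
    rw [Measure.restrict_restrict (measurableSet_lt hψ measurable_const), inter_comm]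
  have hanti : Antitone fun u => incInv Φ (N / ENNReal.ofReal u) := fun u v huv =>
    incInv_mono Φ (ENNReal.div_le_div_left (ENNReal.ofReal_le_ofReal huv) N)
  rw [hlayer _ hanti.measurable, hlayer g hg]
  exact lintegral_mono fun t => setLIntegral_inv_incInv_lt_le hg hN0 hN (hdist _)

end Rearrangement

theorem ENNReal.setOf_lt_eq_iUnion_add_inv_lt {α : Type*} (f : α → ℝ≥0∞) (N : ℝ≥0∞) :
    {a | N < f a} = ⋃ n : ℕ, {a | N + ((n : ℝ≥0∞) + 1)⁻¹ < f a} := by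
  ext a
  simp only [mem_ofPred_eq, mem_iUnion]
  refine ⟨fun ha => ?_, fun ⟨n, hn⟩ => lt_of_le_of_lt le_self_add hn⟩
  obtain ⟨n, hn⟩ := ENNReal.exists_inv_nat_lt (tsub_pos_of_lt ha).ne'
  refine ⟨n, lt_of_le_of_lt ?_ (lt_tsub_iff_left.1 hn)⟩
  gcongr
  exact le_self_add

theorem two_inv_mul_lintegral_le_of_lintegral_ball_le (Q : ℂ → ℝ≥0∞) (hQ : Measurable Q)
    (Φ : ℝ≥0∞ → ℝ≥0∞) (hΦ : Monotone Φ)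
    (hconv : ∀ a b t₁ t₂ : ℝ≥0∞, a + b = 1 → Φ (a * t₁ + b * t₂) ≤ a * Φ t₁ + b * Φ t₂)
    (q : ℝ → ℝ≥0∞)
    (hq : ∀ r : ℝ, q r =
      (∫⁻ θ in Ioo (0:ℝ) (2 * π), Q ((r : ℂ) * Complex.exp (θ * Complex.I))) /
        ENNReal.ofReal (2 * π))
    {N : ℝ≥0∞} (hN0 : N ≠ 0) (hN : N ≠ ∞) (hQN : ∫⁻ z in Metric.ball (0:ℂ) 1, Φ (Q z) ≤ N) :
    2⁻¹ * ∫⁻ τ in {τ : ℝ | N < ENNReal.ofReal τ},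
        (ENNReal.ofReal τ * incInv Φ (ENNReal.ofReal τ))⁻¹ ≤
      ∫⁻ r in Ioo (0:ℝ) 1, (ENNReal.ofReal r * q r)⁻¹ := by
  have hqm : Measurable fun u => q √u := by
    rw [funext hq]
    exact ((measurable_lintegral_circle hQ _).div_const _).comp (by fun_prop)
  have hJensen : ∀ u ∈ Ioo (0 : ℝ) 1, ∀ c < q √u,
      Φ c ≤ ⨍⁻ θ in Ioo 0 (2 * π), Φ (Q (√u * Complex.exp (θ * Complex.I))) ∂volume := by
    intro u _ c hc
    have : NeZero (volume.restrict (Ioo 0 (2 * π))) := ⟨by simp [Real.pi_pos]⟩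
    have hcircle : q √u = ⨍⁻ θ in Ioo 0 (2 * π), Q (√u * Complex.exp (θ * Complex.I)) ∂volume := by
      rw [setLAverage_eq, Real.volume_Ioo, sub_zero, hq]
    rw [hcircle, laverage_eq'] at hc
    exact le_lintegral_comp_of_lt_lintegral hconv hΦ (hQ.comp (by fun_prop)) hc
  have hdist := iSup_lt_mul_measure_le measurableSet_Ioo hqm
    ((lintegral_Ioo_laverage_circle_sqrt_le (hΦ.measurable.comp hQ)).trans hQN) hJensen
  calc 2⁻¹ * ∫⁻ τ in {τ : ℝ | N < ENNReal.ofReal τ},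
        (ENNReal.ofReal τ * incInv Φ (ENNReal.ofReal τ))⁻¹
      = 2⁻¹ * ∫⁻ u in Ioo 0 1, (ENNReal.ofReal u * incInv Φ (N / ENNReal.ofReal u))⁻¹ := by
        rw [lintegral_inv_mul_eq_lintegral_Ioo_comp_div hN0 hN]
    _ ≤ 2⁻¹ * ∫⁻ u in Ioo 0 1, (ENNReal.ofReal u * q √u)⁻¹ := by
        gcongr 2⁻¹ * ?_
        exact lintegral_inv_mul_incInv_le hqm hN0 hN hdist
    _ = ∫⁻ r in Ioo (0:ℝ) 1, (ENNReal.ofReal r * q r)⁻¹ := by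
        rw [lintegral_Ioo_inv_mul_comp_sqrt, ← mul_assoc,
          ENNReal.inv_mul_cancel two_ne_zero ENNReal.ofNat_ne_top, one_mul]

/-- Let `Q : 𝔻 → [0,∞]` be measurable on the unit disk `𝔻 ⊂ ℂ` and
`Φ : [0,∞] → [0,∞]` a non-decreasing convex function.  Let
`q(r) = (1/2π)∫₀^{2π} Q(r e^{iθ}) dθ` be the circular average of `Q` and
`N = ∫_𝔻 Φ(Q(z)) dxdy`.  Then
`∫₀¹ dr/(r q(r)) ≥ (1/2) ∫_N^∞ dτ/(τ Φ⁻¹(τ))`. -/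
theorem stmt10 (Q : ℂ → ℝ≥0∞) (hQ : Measurable Q)
    (Φ : ℝ≥0∞ → ℝ≥0∞) (hΦ : Monotone Φ)
    (hconv : ∀ a b t₁ t₂ : ℝ≥0∞, a + b = 1 → Φ (a * t₁ + b * t₂) ≤ a * Φ t₁ + b * Φ t₂)
    (q : ℝ → ℝ≥0∞)
    (hq : ∀ r : ℝ, q r =
      (∫⁻ θ in Ioo (0:ℝ) (2 * π), Q ((r : ℂ) * Complex.exp (θ * Complex.I))) /
        ENNReal.ofReal (2 * π))
    (N : ℝ≥0∞) (hN : N = ∫⁻ z in Metric.ball (0:ℂ) 1, Φ (Q z)) :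
    2⁻¹ * ∫⁻ τ in {τ : ℝ | N < ENNReal.ofReal τ},
        (ENNReal.ofReal τ * incInv Φ (ENNReal.ofReal τ))⁻¹ ≤
      ∫⁻ r in Ioo (0:ℝ) 1, (ENNReal.ofReal r * q r)⁻¹ := by
  rcases eq_or_ne N ∞ with rfl | hN_top
  · simp
  -- Approximating `N` from above keeps it nonzero, as the substitution `τ = N / u` requires.
  set N' : ℕ → ℝ≥0∞ := fun n => N + ((n : ℝ≥0∞) + 1)⁻¹
  have hmono : Monotone fun n => {τ : ℝ | N' n < ENNReal.ofReal τ} :=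
    fun m n hmn τ (hτ : N' m < _) => show N' n < _ from
      lt_of_le_of_lt (show N + ((n : ℝ≥0∞) + 1)⁻¹ ≤ N + ((m : ℝ≥0∞) + 1)⁻¹ by gcongr) hτ
  rw [ENNReal.setOf_lt_eq_iUnion_add_inv_lt, setLIntegral_iUnion_of_directed _ hmono.directed_le,
    ENNReal.mul_iSup]
  exact iSup_le fun n => two_inv_mul_lintegral_le_of_lintegral_ball_le Q hQ Φ hΦ hconv q hq
    (by simp [N']) (by simp [N', hN_top]) (hN ▸ le_self_add)
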